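/- If A = [[a₁₁, a₁₂],[ā₁₂, a₂₂]] and B = [[b₁₁, b₁₂],[b̄₁₂, b₂₂]] are positive definite octonionic hermitian 2×2 matrices, then the mixed determinant det(A,B) := ½(a₁₁b₂₂ + a₂₂b₁₁ − 2Re(a₁₂ b̄₁₂)) is strictly positive. -/

import Mathlib

noncomputable section

def Oct : Type := Quaternion ℝ × Quaternion ℝ

namespace Oct

def fst (p : Oct) : Quaternion ℝ := Prod.fst p
def snd (p : Oct) : Quaternion ℝ := Prod.snd p

instance : NormedAddCommGroup Oct :=
  inferInstanceAs (NormedAddCommGroup (Quaternion ℝ × Quaternion ℝ))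
instance : NormedSpace ℝ Oct :=
  inferInstanceAs (NormedSpace ℝ (Quaternion ℝ × Quaternion ℝ))
instance : MeasurableSpace Oct := borel Oct

instance : One Oct := ⟨((1 : Quaternion ℝ), (0 : Quaternion ℝ))⟩

/-- Cayley–Dickson multiplication on 𝕆 = ℍ × ℍ. -/
instance : Mul Oct := ⟨fun p q =>
  (fst p * fst q - star (snd q) * snd p, snd q * fst p + snd p * star (fst q))⟩

/-- Octonionic conjugation. -/
def conj (p : Oct) : Oct := (star (fst p), -(snd p))

/-- Real part of an octonion. -/
def re (p : Oct) : ℝ := (fst p).re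

/-- |p|² = Re(p p̄). -/
def normSq (p : Oct) : ℝ := re (p * conj p)

/-- Embedding of the reals into the octonions. -/
def ofReal (r : ℝ) : Oct := ((r : Quaternion ℝ), (0 : Quaternion ℝ))

end Oct

/-!
Viewing `𝕆 = ℍ × ℍ` as the Euclidean space `ℝ⁸`, `Re (p * q̄)` is the inner product and `normSq` the
squared norm, so Cauchy–Schwarz gives `Re (a₁₂ b̄₁₂) ≤ |a₁₂| |b₁₂|`. What remains is real: by AM–GM,
`a₁₁ b₂₂ + a₂₂ b₁₁ ≥ 2 √(a₁₁ a₂₂ b₁₁ b₂₂) > 2 |a₁₂| |b₁₂|`.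
-/

open Quaternion

theorem two_mul_mul_lt_of_sq_lt {a₁ a₂ b₁ b₂ s t : ℝ} (ha₁ : 0 < a₁) (hb₁ : 0 < b₁)
    (hs : s ^ 2 < a₁ * a₂) (ht : t ^ 2 < b₁ * b₂) : 2 * s * t < a₁ * b₂ + a₂ * b₁ := by
  have ha₂ : 0 < a₂ := pos_of_mul_pos_right ((sq_nonneg s).trans_lt hs) ha₁.le
  have hb₂ : 0 < b₂ := pos_of_mul_pos_right ((sq_nonneg t).trans_lt ht) hb₁.le
  have hst : (2 * s * t) ^ 2 < (a₁ * b₂ + a₂ * b₁) ^ 2 := calc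
    (2 * s * t) ^ 2 = 4 * s ^ 2 * t ^ 2 := by ring
    _ < 4 * (a₁ * a₂) * (b₁ * b₂) := by gcongr
    _ ≤ (a₁ * b₂ + a₂ * b₁) ^ 2 := by nlinarith [sq_nonneg (a₁ * b₂ - a₂ * b₁)]
  exact lt_of_abs_lt (abs_lt_of_sq_lt_sq hst (by positivity))

namespace Oct

def toL2 (p : Oct) : WithLp 2 (ℍ[ℝ] × ℍ[ℝ]) := WithLp.toLp 2 (p.fst, p.snd)

theorem re_mul_conj (p q : Oct) : re (p * conj q) = inner ℝ p.toL2 q.toL2 := by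
  show (p.fst * star q.fst - star (-q.snd) * p.snd).re = _
  simp only [toL2, WithLp.prod_inner_apply, inner_def, star_neg, neg_mul, sub_neg_eq_add,
    re_add, re_mul, re_star, imI_star, imJ_star, imK_star]
  ring

theorem normSq_eq_norm_sq (p : Oct) : normSq p = ‖p.toL2‖ ^ 2 := by
  rw [normSq, re_mul_conj, real_inner_self_eq_norm_sq]

theorem normSq_nonneg (p : Oct) : 0 ≤ normSq p :=
  normSq_eq_norm_sq p ▸ sq_nonneg _

theorem re_mul_conj_le (p q : Oct) : re (p * conj q) ≤ √(normSq p) * √(normSq q) := by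
  simpa only [re_mul_conj, normSq_eq_norm_sq, Real.sqrt_sq (norm_nonneg _)]
    using real_inner_le_norm p.toL2 q.toL2

end Oct

/-- The mixed determinant of two positive definite octonionic hermitian matrices is
positive.  (Positive definiteness is expressed by the Sylvester criterion.) -/
theorem mixedDet_pos (a11 a22 b11 b22 : ℝ) (a12 b12 : Oct)
    (hA1 : 0 < a11) (hA2 : 0 < a11 * a22 - Oct.normSq a12)
    (hB1 : 0 < b11) (hB2 : 0 < b11 * b22 - Oct.normSq b12) :
    0 < (a11 * b22 + a22 * b11 - 2 * Oct.re (a12 * Oct.conj b12)) / 2 := by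
  have hsA : √(Oct.normSq a12) ^ 2 < a11 * a22 := by
    rw [Real.sq_sqrt (Oct.normSq_nonneg a12)]; linarith
  have hsB : √(Oct.normSq b12) ^ 2 < b11 * b22 := by
    rw [Real.sq_sqrt (Oct.normSq_nonneg b12)]; linarith
  have hdiag := two_mul_mul_lt_of_sq_lt hA1 hB1 hsA hsB
  have hcs := Oct.re_mul_conj_le a12 b12
  linarith
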